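/- For a positive semi-definite 2×2 matrix K = [[K1, K3],[K3, K2]] with K1, K2 > 0, and (z1, z2) ~ N(0, K), the expectation E[ReLU'(z1)·ReLU'(z2)] equals (1/(2π))·(π − arccos(c)), where c = K3/√(K1·K2) and ReLU'(x) = 1 if x > 0 and 0 if x < 0 (the derivative of ReLU, defined almost everywhere). -/

import Mathlib

open MeasureTheory ProbabilityTheory Real

/-- The standard Gaussian measure on `ℝ × ℝ`. -/
noncomputable def stdGauss2 : Measure (ℝ × ℝ) :=
  (gaussianReal 0 1).prod (gaussianReal 0 1)

/-- First coordinate of a centered bivariate Gaussian with covariance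
`[[K1, K3], [K3, K2]]`, realized from two independent standard Gaussians. -/
noncomputable def gaussZ1 (K1 : ℝ) (p : ℝ × ℝ) : ℝ := Real.sqrt K1 * p.1

/-- Second coordinate of a centered bivariate Gaussian with covariance
`[[K1, K3], [K3, K2]]`. -/
noncomputable def gaussZ2 (K1 K2 K3 : ℝ) (p : ℝ × ℝ) : ℝ :=
  (K3 / Real.sqrt K1) * p.1 + Real.sqrt (K2 - K3 ^ 2 / K1) * p.2

/-- The a.e. derivative of ReLU: the Heaviside step function. -/
noncomputable def reluDeriv (x : ℝ) : ℝ := if 0 < x then 1 else 0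

/-! In polar coordinates the standard Gaussian on `ℝ²` splits into the radial density
`r e^{-r²/2}`, of total mass `1`, and the uniform angle on `(-π, π)`; hence a function invariant
under positive scaling integrates to its angular average. On the unit circle
`z₁ = √K1 cos θ` and `z₂ = √K2 cos (θ - φ)` with `φ = arccos c` the angle between the rows of the
Cholesky factor of `K`, so `ReLU'(z₁) ReLU'(z₂)` is the indicator of the arc
`(φ - π/2, π/2)`, of length `π - φ`. -/

open Set

lemma gaussianPDFReal_zero_one_mul (x y : ℝ) :
    gaussianPDFReal 0 1 x * gaussianPDFReal 0 1 y = (2 * π)⁻¹ * exp (-(x ^ 2 + y ^ 2) / 2) := by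
  have h2π : √(2 * π) * √(2 * π) = 2 * π := mul_self_sqrt (by positivity)
  simp only [gaussianPDFReal, NNReal.coe_one, mul_one, sub_zero]
  rw [mul_mul_mul_comm, ← mul_inv, h2π, ← exp_add]
  ring_nf

lemma integral_stdGauss2 (F : ℝ × ℝ → ℝ) :
    ∫ p, F p ∂stdGauss2 = ∫ p, (2 * π)⁻¹ * exp (-(p.1 ^ 2 + p.2 ^ 2) / 2) * F p := by
  have hpdf := measurable_gaussianPDF (0 : ℝ) 1
  rw [stdGauss2, gaussianReal_of_var_ne_zero 0 one_ne_zero, prod_withDensity hpdf hpdf,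
    ← Measure.volume_eq_prod, integral_withDensity_eq_integral_toReal_smul
      (by fun_prop : Measurable fun z : ℝ × ℝ => gaussianPDF 0 1 z.1 * gaussianPDF 0 1 z.2)
      (ae_of_all _ fun _ => ENNReal.mul_lt_top ENNReal.ofReal_lt_top ENNReal.ofReal_lt_top)]
  congr 1 with p
  rw [ENNReal.toReal_mul, gaussianPDF, gaussianPDF,
    ENNReal.toReal_ofReal (gaussianPDFReal_nonneg ..),
    ENNReal.toReal_ofReal (gaussianPDFReal_nonneg ..), gaussianPDFReal_zero_one_mul, smul_eq_mul]

lemma integral_Ioi_mul_exp_neg_sq_div_two : ∫ r in Ioi (0 : ℝ), r * exp (-(r ^ 2) / 2) = 1 := by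
  have h := integral_rpow_mul_exp_neg_mul_rpow two_pos (by norm_num : (-1 : ℝ) < 1)
    (by norm_num : (0 : ℝ) < 1 / 2)
  norm_num at h
  rw [← h]
  exact setIntegral_congr_fun measurableSet_Ioi fun r _ => by ring_nf

theorem integral_stdGauss2_of_smul_invariant (F : ℝ × ℝ → ℝ)
    (hF : ∀ r : ℝ, 0 < r → ∀ p, F (r • p) = F p) :
    ∫ p, F p ∂stdGauss2 = (2 * π)⁻¹ * ∫ θ in Ioo (-π) π, F (cos θ, sin θ) := by
  calc ∫ p, F p ∂stdGauss2
      = ∫ p in Ioi 0 ×ˢ Ioo (-π) π, (2 * π)⁻¹ * (p.1 * exp (-(p.1 ^ 2) / 2)) *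
          F (cos p.2, sin p.2) := by
        rw [integral_stdGauss2, ← integral_comp_polarCoord_symm, polarCoord_target]
        refine setIntegral_congr_fun (measurableSet_Ioi.prod measurableSet_Ioo) ?_
        rintro ⟨r, θ⟩ ⟨hr, -⟩
        have hpolar : polarCoord.symm (r, θ) = r • (cos θ, sin θ) := by
          simp [polarCoord_symm_apply]
        have hsq : (r * cos θ) ^ 2 + (r * sin θ) ^ 2 = r ^ 2 := by
          linear_combination r ^ 2 * cos_sq_add_sin_sq θ
        simp only [hpolar, hF r hr]
        simp only [Prod.smul_mk, smul_eq_mul, hsq]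
        ring
    _ = (2 * π)⁻¹ * (∫ r in Ioi 0, r * exp (-(r ^ 2) / 2)) *
          ∫ θ in Ioo (-π) π, F (cos θ, sin θ) := by
        rw [Measure.volume_eq_prod, setIntegral_prod_mul
          (fun r => (2 * π)⁻¹ * (r * exp (-(r ^ 2) / 2))) fun θ => F (cos θ, sin θ),
          integral_const_mul]
    _ = (2 * π)⁻¹ * ∫ θ in Ioo (-π) π, F (cos θ, sin θ) := by
        rw [integral_Ioi_mul_exp_neg_sq_div_two, mul_one]

lemma reluDeriv_mul_of_pos {a : ℝ} (ha : 0 < a) (x : ℝ) : reluDeriv (a * x) = reluDeriv x := by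
  simp only [reluDeriv, mul_pos_iff_of_pos_left ha]

lemma reluDeriv_mul_reluDeriv (x y : ℝ) :
    reluDeriv x * reluDeriv y = if 0 < x ∧ 0 < y then 1 else 0 := by
  unfold reluDeriv
  split_ifs <;> simp_all

lemma cos_pos_and_cos_sub_pos_iff {φ θ : ℝ} (hφ₀ : 0 ≤ φ) (hφπ : φ ≤ π) (hθ : θ ∈ Ioo (-π) π) :
    0 < cos θ ∧ 0 < cos (θ - φ) ↔ θ ∈ Ioo (φ - π / 2) (π / 2) := by
  obtain ⟨hθ₁, hθ₂⟩ := hθ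
  refine ⟨fun ⟨h₁, h₂⟩ => ?_, fun ⟨h₁, h₂⟩ =>
    ⟨cos_pos_of_mem_Ioo ⟨by linarith, h₂⟩, cos_pos_of_mem_Ioo ⟨by linarith, by linarith⟩⟩⟩
  have hθ_lt : θ < π / 2 := by
    by_contra! h
    linarith [cos_nonpos_of_pi_div_two_le_of_le h (by linarith)]
  have hθ_gt : -(π / 2) < θ := by
    by_contra! h
    linarith [cos_neg θ ▸ cos_nonpos_of_pi_div_two_le_of_le (x := -θ) (by linarith) (by linarith)]
  refine ⟨?_, hθ_lt⟩
  by_contra! h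
  have := cos_nonpos_of_pi_div_two_le_of_le (x := φ - θ) (by linarith) (by linarith)
  rw [← cos_neg, neg_sub] at this
  linarith

theorem integral_reluDeriv_cos_mul_reluDeriv_cos_sub {φ : ℝ} (hφ₀ : 0 ≤ φ) (hφπ : φ ≤ π) :
    ∫ θ in Ioo (-π) π, reluDeriv (cos θ) * reluDeriv (cos (θ - φ)) = π - φ := by
  have hsector : Ioo (-π) π ∩ Ioo (φ - π / 2) (π / 2) = Ioo (φ - π / 2) (π / 2) :=
    inter_eq_right.2 (Ioo_subset_Ioo (by linarith [pi_pos]) (by linarith [pi_pos]))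
  calc ∫ θ in Ioo (-π) π, reluDeriv (cos θ) * reluDeriv (cos (θ - φ))
      = ∫ θ in Ioo (-π) π, (Ioo (φ - π / 2) (π / 2)).indicator 1 θ := by
        refine setIntegral_congr_fun measurableSet_Ioo fun θ hθ => ?_
        simp only [reluDeriv_mul_reluDeriv, indicator_apply,
          cos_pos_and_cos_sub_pos_iff hφ₀ hφπ hθ, Pi.one_apply]
    _ = π - φ := by
        rw [setIntegral_indicator measurableSet_Ioo, hsector, Pi.one_def, setIntegral_const,
          volume_real_Ioo_of_le (by linarith [pi_pos]), smul_eq_mul, mul_one]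
        ring

lemma gaussZ1_smul (K1 r : ℝ) (p : ℝ × ℝ) : gaussZ1 K1 (r • p) = r * gaussZ1 K1 p := by
  simp only [gaussZ1, Prod.smul_fst, smul_eq_mul]
  ring

lemma gaussZ2_smul (K1 K2 K3 r : ℝ) (p : ℝ × ℝ) :
    gaussZ2 K1 K2 K3 (r • p) = r * gaussZ2 K1 K2 K3 p := by
  simp only [gaussZ2, Prod.smul_fst, Prod.smul_snd, smul_eq_mul]
  ring

lemma gaussZ2_cos_sin {K1 K2 K3 : ℝ} (hK1 : 0 < K1) (hK2 : 0 < K2) (hPSD : K3 ^ 2 ≤ K1 * K2)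
    (θ : ℝ) :
    gaussZ2 K1 K2 K3 (cos θ, sin θ) = √K2 * cos (θ - arccos (K3 / √(K1 * K2))) := by
  have hK12 : 0 < √(K1 * K2) := sqrt_pos.2 (mul_pos hK1 hK2)
  have hc : |K3 / √(K1 * K2)| ≤ 1 := by
    rw [abs_div, abs_of_pos hK12]
    exact div_le_one_of_le₀ (abs_le_sqrt hPSD) hK12.le
  obtain ⟨hc₁, hc₂⟩ := abs_le.1 hc
  have hcos : √K2 * cos (arccos (K3 / √(K1 * K2))) = K3 / √K1 := by
    rw [cos_arccos hc₁ hc₂, sqrt_mul hK1.le]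
    field_simp
  have hsin : √K2 * sin (arccos (K3 / √(K1 * K2))) = √(K2 - K3 ^ 2 / K1) := by
    rw [sin_arccos, ← sqrt_mul hK2.le, div_pow, sq_sqrt (mul_pos hK1 hK2).le]
    congr 1
    field_simp
  rw [gaussZ2, cos_sub, ← hcos, ← hsin]
  ring

/-- For a PSD 2×2 covariance `K = [[K1,K3],[K3,K2]]` with `K1, K2 > 0` and
`(z1, z2) ∼ N(0, K)`, `E[ReLU'(z1) · ReLU'(z2)] = (1/(2π)) (π − arccos c)`
with `c = K3/√(K1 K2)`. -/
theorem rntk_Vphi_relu_deriv (K1 K2 K3 : ℝ) (hK1 : 0 < K1) (hK2 : 0 < K2)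
    (hPSD : K3 ^ 2 ≤ K1 * K2) :
    ∫ p, reluDeriv (gaussZ1 K1 p) * reluDeriv (gaussZ2 K1 K2 K3 p) ∂stdGauss2 =
      (1 / (2 * π)) * (π - Real.arccos (K3 / Real.sqrt (K1 * K2))) := by
  set φ := arccos (K3 / √(K1 * K2))
  have hcircle : ∀ θ, reluDeriv (gaussZ1 K1 (cos θ, sin θ)) *
      reluDeriv (gaussZ2 K1 K2 K3 (cos θ, sin θ)) = reluDeriv (cos θ) * reluDeriv (cos (θ - φ)) :=
    fun θ => by
      rw [gaussZ2_cos_sin hK1 hK2 hPSD, gaussZ1, reluDeriv_mul_of_pos (sqrt_pos.2 hK1),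
        reluDeriv_mul_of_pos (sqrt_pos.2 hK2)]
  rw [integral_stdGauss2_of_smul_invariant _ fun r hr p => by
      rw [gaussZ1_smul, gaussZ2_smul, reluDeriv_mul_of_pos hr, reluDeriv_mul_of_pos hr]]
  simp_rw [hcircle]
  rw [integral_reluDeriv_cos_mul_reluDeriv_cos_sub (φ := φ) (arccos_nonneg _) (arccos_le_pi _),
    one_div]
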